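/- For r ∈ (1, √3) define k(r) = √((1 + r²)(3 − r²))/(2r). Then for every r ∈ (1, √3), 2 < ((1 − r²)/r)·K(k(r)) + 2r·E(k(r)) < 2π/√3, where K and E are the complete elliptic integrals of the first and second kind. -/

import Mathlib

/-!
With `Δ(x) = √(1 - k² sin² x)`, the area is `∫₀^{π/2} F` for the integrand
`F = (1 - r²)/(r Δ) + 2 r Δ`. Since `1 - r² < 0`, `F` is increasing in `Δ ≤ 1`, so
`F ≤ (1 + r²)/r`, and `(π/2)(1 + r²)/r < 2π/√3` on `(1, √3)`. For the lower bound,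
`r Δ F = (1 + r²)(1 - (3 - r²) sin² x / 2)` and squaring shows `2 cos x < F` for every `x`;
integrating gives `A(r) > 2`.
-/

open Real

/-- The complete elliptic integral of the first kind. -/
noncomputable def ellipticK (k : ℝ) : ℝ :=
  ∫ x in (0 : ℝ)..(π / 2), (Real.sqrt (1 - k ^ 2 * Real.sin x ^ 2))⁻¹

/-- The complete elliptic integral of the second kind. -/
noncomputable def ellipticE (k : ℝ) : ℝ :=
  ∫ x in (0 : ℝ)..(π / 2), Real.sqrt (1 - k ^ 2 * Real.sin x ^ 2)

/-- The modulus `k(r) = √((1+r²)(3−r²))/(2r)`. -/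
noncomputable def kmod (r : ℝ) : ℝ := Real.sqrt ((1 + r ^ 2) * (3 - r ^ 2)) / (2 * r)

open Set intervalIntegral

noncomputable def ellipticDelta (k x : ℝ) : ℝ := √(1 - k ^ 2 * sin x ^ 2)

section ellipticDelta

variable {k : ℝ}

lemma ellipticDelta_pos (hk : k ^ 2 < 1) (x : ℝ) : 0 < ellipticDelta k x := by
  have : k ^ 2 * sin x ^ 2 < 1 := by nlinarith [sin_sq_le_one x, sq_nonneg (sin x)]
  exact sqrt_pos.2 (by linarith)

lemma ellipticDelta_le_one (k x : ℝ) : ellipticDelta k x ≤ 1 :=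
  sqrt_le_one.2 (by nlinarith [sq_nonneg k, sq_nonneg (sin x)])

lemma sq_ellipticDelta (hk : k ^ 2 ≤ 1) (x : ℝ) :
    ellipticDelta k x ^ 2 = 1 - k ^ 2 * sin x ^ 2 :=
  sq_sqrt (by nlinarith [sin_sq_le_one x, sq_nonneg (sin x)])

@[fun_prop]
lemma continuous_ellipticDelta (k : ℝ) : Continuous (ellipticDelta k) := by
  unfold ellipticDelta; fun_prop

lemma continuous_inv_ellipticDelta (hk : k ^ 2 < 1) :
    Continuous fun x ↦ (ellipticDelta k x)⁻¹ :=
  (continuous_ellipticDelta k).inv₀ fun x ↦ (ellipticDelta_pos hk x).ne'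

lemma mul_ellipticK_add_mul_ellipticE (hk : k ^ 2 < 1) (a b : ℝ) :
    a * ellipticK k + b * ellipticE k =
      ∫ x in (0 : ℝ)..(π / 2), (a * (ellipticDelta k x)⁻¹ + b * ellipticDelta k x) := by
  have hK : IntervalIntegrable (fun x ↦ (ellipticDelta k x)⁻¹) MeasureTheory.volume 0 (π / 2) :=
    (continuous_inv_ellipticDelta hk).intervalIntegrable _ _
  have hE : IntervalIntegrable (ellipticDelta k) MeasureTheory.volume 0 (π / 2) :=
    (continuous_ellipticDelta k).intervalIntegrable _ _
  rw [integral_add (hK.const_mul a) (hE.const_mul b), integral_const_mul, integral_const_mul]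
  rfl

end ellipticDelta

section kmod

variable {r : ℝ}

lemma sq_kmod (hr₃ : r ^ 2 ≤ 3) :
    kmod r ^ 2 = (1 + r ^ 2) * (3 - r ^ 2) / (4 * r ^ 2) := by
  rw [kmod, div_pow, sq_sqrt (by nlinarith [sq_nonneg r])]
  ring

lemma sq_kmod_lt_one (hr₁ : 1 < r ^ 2) (hr₃ : r ^ 2 ≤ 3) : kmod r ^ 2 < 1 := by
  rw [sq_kmod hr₃, div_lt_one (by linarith)]
  nlinarith

end kmod

lemma mul_inv_add_mul_le {r g : ℝ} (hr : 1 ≤ r) (hg₀ : 0 < g) (hg₁ : g ≤ 1) :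
    (1 - r ^ 2) / r * g⁻¹ + 2 * r * g ≤ (1 + r ^ 2) / r := by
  have hr₀ : 0 < r := by linarith
  have key : (1 + r ^ 2) / r - ((1 - r ^ 2) / r * g⁻¹ + 2 * r * g)
      = (1 - g) * (2 * r ^ 2 * g + (r ^ 2 - 1)) / (r * g) := by
    field_simp
    ring
  have : 0 ≤ (1 - g) * (2 * r ^ 2 * g + (r ^ 2 - 1)) / (r * g) := by
    apply div_nonneg _ (by positivity)
    exact mul_nonneg (by linarith) (by nlinarith)
  linarith

lemma one_sub_mul_sub_mul_lt_sq {u s : ℝ} (hu : 1 < u) (hs₀ : 0 ≤ s) (hs₁ : s ≤ 1) :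
    (1 - s) * (4 * u - (1 + u) * (3 - u) * s) < ((1 + u) * (2 - (3 - u) * s) / 2) ^ 2 := by
  -- the difference is `(u - 1)² (1 + u s - (1 + u)(3 - u) s² / 4)`,
  -- and `(1 + u)(3 - u) = 4 - (u - 1)²`
  have hfactor : 0 < 1 + u * s - (1 + u) * (3 - u) * s ^ 2 / 4 := by
    nlinarith [mul_nonneg (sq_nonneg (u - 1)) (sq_nonneg s), mul_nonneg hs₀ (sub_nonneg.2 hs₁)]
  nlinarith [mul_pos (pow_pos (sub_pos.2 hu) 2) hfactor]

noncomputable def areaIntegrand (r x : ℝ) : ℝ :=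
  (1 - r ^ 2) / r * (ellipticDelta (kmod r) x)⁻¹ + 2 * r * ellipticDelta (kmod r) x

section areaIntegrand

variable {r : ℝ} (hr₁ : 1 < r) (hr₃ : r ^ 2 < 3)
include hr₁ hr₃

lemma area_eq_integral_areaIntegrand :
    (1 - r ^ 2) / r * ellipticK (kmod r) + 2 * r * ellipticE (kmod r) =
      ∫ x in (0 : ℝ)..(π / 2), areaIntegrand r x :=
  mul_ellipticK_add_mul_ellipticE (sq_kmod_lt_one (by nlinarith) hr₃.le) _ _

lemma continuous_areaIntegrand : Continuous (areaIntegrand r) := by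
  have := continuous_inv_ellipticDelta (sq_kmod_lt_one (r := r) (by nlinarith) hr₃.le)
  unfold areaIntegrand
  fun_prop

lemma areaIntegrand_le (x : ℝ) : areaIntegrand r x ≤ (1 + r ^ 2) / r :=
  mul_inv_add_mul_le hr₁.le (ellipticDelta_pos (sq_kmod_lt_one (by nlinarith) hr₃.le) x)
    (ellipticDelta_le_one _ x)

lemma two_mul_cos_lt_areaIntegrand (x : ℝ) : 2 * cos x < areaIntegrand r x := by
  have hr₀ : 0 < r := by linarith
  have hk := sq_kmod_lt_one (r := r) (by nlinarith) hr₃.le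
  set g := ellipticDelta (kmod r) x
  have hg : 0 < g := ellipticDelta_pos hk x
  have hg2 : g ^ 2 = 1 - kmod r ^ 2 * sin x ^ 2 := sq_ellipticDelta hk.le x
  have hk4 : kmod r ^ 2 * (4 * r ^ 2) = (1 + r ^ 2) * (3 - r ^ 2) := by
    rw [sq_kmod hr₃.le]; field_simp
  set N := (1 + r ^ 2) * (2 - (3 - r ^ 2) * sin x ^ 2) / 2
  have hN : r * g * areaIntegrand r x = N := by
    have : areaIntegrand r x = (1 - r ^ 2) / r * g⁻¹ + 2 * r * g := rfl
    rw [this]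
    field_simp
    linear_combination 2 * r ^ 2 * hg2 - sin x ^ 2 / 2 * hk4
  have hN₀ : 0 < N := by
    have : (3 - r ^ 2) * sin x ^ 2 < 2 := by nlinarith [sin_sq_le_one x, sq_nonneg (sin x)]
    exact div_pos (mul_pos (by positivity) (by linarith)) two_pos
  have hsq : (2 * cos x * (r * g)) ^ 2 =
      (1 - sin x ^ 2) * (4 * r ^ 2 - (1 + r ^ 2) * (3 - r ^ 2) * sin x ^ 2) := by
    linear_combination (4 * r ^ 2 * g ^ 2) * cos_sq' x + 4 * r ^ 2 * (1 - sin x ^ 2) * hg2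
      - (1 - sin x ^ 2) * sin x ^ 2 * hk4
  have hlt : 2 * cos x * (r * g) < N :=
    (abs_lt_of_sq_lt_sq (hsq ▸ one_sub_mul_sub_mul_lt_sq (by nlinarith) (sq_nonneg _)
      (sin_sq_le_one x)) hN₀.le).trans_le' (le_abs_self _)
  rw [← hN, mul_comm (r * g)] at hlt
  exact lt_of_mul_lt_mul_right hlt (mul_pos hr₀ hg).le

end areaIntegrand

lemma one_add_sq_div_lt {r : ℝ} (h₁ : 1 < √3 * r) (h₂ : r < √3) :
    (1 + r ^ 2) / r < 4 / √3 := by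
  have h3 : √3 ^ 2 = 3 := sq_sqrt (by norm_num)
  have hr₀ : 0 < r := by nlinarith [sqrt_nonneg 3]
  rw [div_lt_div_iff₀ hr₀ (by positivity)]
  -- `4r - √3(1 + r²) = (√3 - r)(√3 r - 1)`
  nlinarith [mul_pos (sub_pos.2 h₂) (sub_pos.2 h₁)]

/-- the area function lies strictly between `2` and `2π/√3` on `(1,√3)`. -/
theorem stmt_5 :
    ∀ r ∈ Set.Ioo (1 : ℝ) (Real.sqrt 3),
      2 < ((1 - r ^ 2) / r) * ellipticK (kmod r) + 2 * r * ellipticE (kmod r) ∧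
      ((1 - r ^ 2) / r) * ellipticK (kmod r) + 2 * r * ellipticE (kmod r) <
        2 * π / Real.sqrt 3 := by
  rintro r ⟨hr₁, hr₃⟩
  have hr₃' : r ^ 2 < 3 := (lt_sqrt (by linarith)).1 hr₃
  have hcont := continuous_areaIntegrand hr₁ hr₃'
  rw [area_eq_integral_areaIntegrand hr₁ hr₃']
  constructor
  · calc (2 : ℝ) = ∫ x in (0 : ℝ)..(π / 2), 2 * cos x := by simp
      _ < ∫ x in (0 : ℝ)..(π / 2), areaIntegrand r x :=
        integral_lt_integral_of_continuousOn_of_le_of_exists_lt (by positivity)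
          (by fun_prop) hcont.continuousOn
          (fun x _ ↦ (two_mul_cos_lt_areaIntegrand hr₁ hr₃' x).le)
          ⟨0, left_mem_Icc.2 (by positivity), two_mul_cos_lt_areaIntegrand hr₁ hr₃' 0⟩
  · calc ∫ x in (0 : ℝ)..(π / 2), areaIntegrand r x
        ≤ ∫ x in (0 : ℝ)..(π / 2), (1 + r ^ 2) / r :=
          integral_mono_on (by positivity) (hcont.intervalIntegrable _ _)
            intervalIntegrable_const fun x _ ↦ areaIntegrand_le hr₁ hr₃' x
      _ = π / 2 * ((1 + r ^ 2) / r) := by simp only [integral_const, sub_zero, smul_eq_mul]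
      _ < π / 2 * (4 / √3) := by
        refine mul_lt_mul_of_pos_left (one_add_sq_div_lt ?_ hr₃) (by positivity)
        nlinarith [sqrt_nonneg 3, sq_sqrt (show (0:ℝ) ≤ 3 by norm_num)]
      _ = 2 * π / √3 := by ring
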